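/- Let k be a field, f ∈ k[t,x], and set q(α,t,x) = f(t + αx, x) ∈ k[α,t,x]. Let L be a field extension of k(α,t) and φ ∈ L a simple root in x of q, i.e., q(α,t,φ) = 0 and ∂_x q(α,t,φ) ≠ 0, with L = k(α,t,φ). Then the partial-derivative derivations ∂_α and ∂_t of k(α,t) extend uniquely to derivations of L, and these extensions satisfy Burger's equation: ∂_α φ = φ · ∂_t φ. -/

import Mathlib

open Polynomial

/-- The field `k(α,t)`: the fraction field of `k[α,t]`, the variable `false` being `α` and
`true` being `t`. -/
abbrev AlphaTField (k : Type*) [Field k] : Type _ :=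
  FractionRing (MvPolynomial Bool k)

/-- The element `α` of `k(α,t)`. -/
noncomputable def alphaGen (k : Type*) [Field k] : AlphaTField k :=
  algebraMap (MvPolynomial Bool k) (AlphaTField k) (MvPolynomial.X false)

/-- The element `t` of `k(α,t)`. -/
noncomputable def tGen (k : Type*) [Field k] : AlphaTField k :=
  algebraMap (MvPolynomial Bool k) (AlphaTField k) (MvPolynomial.X true)

/-- For `f(t,x) ∈ k[t,x]` (the variable `false` being `t` and `true` being `x`), the
one-variable polynomial `q(α,t,x) = f(t + αx, x)` with coefficients in `k(α,t)`. -/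
noncomputable def burgerQ (k : Type*) [Field k] (f : MvPolynomial Bool k) :
    Polynomial (AlphaTField k) :=
  MvPolynomial.eval₂ (Polynomial.C.comp (algebraMap k (AlphaTField k)))
    (fun i => match i with
      | false => Polynomial.C (tGen k) + Polynomial.C (alphaGen k) * Polynomial.X
      | true => Polynomial.X)
    f

/-!
Since `q(φ) = f(t + αφ, φ)`, the chain rule gives, for every `k`-derivation `D` of `L`,
`0 = D (q(φ)) = f_t(t + αφ, φ) · (D t + φ · D α) + q'(φ) · D φ`.
As `q'(φ) ≠ 0`, `D φ` is determined by `D α` and `D t`, which gives uniqueness, and comparing the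
identity for `D = ∂_α` and `D = ∂_t` gives Burger's equation.
For existence, `∂_α` and `∂_t` extend from `k[α,t]` to its fraction field through the dual numbers,
and then to `L ≅ k(α,t)[X] ⧸ (m)`, `m` the minimal polynomial of `φ`, which is a simple root of `m`.
-/

theorem Derivation.apply_mvPolynomial_aeval {R A M σ : Type*} [CommSemiring R] [CommSemiring A]
    [Algebra R A] [AddCommMonoid M] [Module A M] [Module R M] [IsScalarTower R A M] [Fintype σ]
    (D : Derivation R A M) (v : σ → A) (p : MvPolynomial σ R) :
    D (MvPolynomial.aeval v p) = ∑ i, MvPolynomial.aeval v (MvPolynomial.pderiv i p) • D (v i) := by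
  classical
  induction p using MvPolynomial.induction_on with
  | C a => simp
  | add p q hp hq => simp [hp, hq, add_smul, Finset.sum_add_distrib]
  | mul_X p j hp =>
    simp [Derivation.leibniz, hp, MvPolynomial.pderiv_X, Pi.single_apply, add_smul, mul_smul,
      Finset.sum_add_distrib, Finset.smul_sum, apply_ite (MvPolynomial.aeval v), ite_smul]

section Localization

variable {R A B : Type*} [CommSemiring R] [CommRing A] [CommRing B] [Algebra R B] [Algebra A B]

def Derivation.ofRingHomTrivSqZeroExt (σ : B →+* TrivSqZeroExt B B) (hfst : ∀ x, (σ x).fst = x)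
    (halg : ∀ r : R, (σ (algebraMap R B r)).snd = 0) : Derivation R B B :=
  Derivation.mk'
    { toFun x := (σ x).snd
      map_add' x y := by simp
      map_smul' r x := by simp [Algebra.smul_def, halg, hfst] }
    (fun x y => by simp [hfst, mul_comm])

@[simp]
theorem Derivation.ofRingHomTrivSqZeroExt_apply (σ : B →+* TrivSqZeroExt B B)
    (hfst : ∀ x, (σ x).fst = x) (halg : ∀ r : R, (σ (algebraMap R B r)).snd = 0) (x : B) :
    Derivation.ofRingHomTrivSqZeroExt σ hfst halg x = (σ x).snd :=
  rfl

theorem Derivation.ext_of_isLocalization {M : Type*} [AddCommGroup M] [Module B M] [Module R M]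
    (S : Submonoid A) [IsLocalization S B] {d₁ d₂ : Derivation R B M}
    (h : ∀ a, d₁ (algebraMap A B a) = d₂ (algebraMap A B a)) : d₁ = d₂ := by
  ext x
  obtain ⟨⟨a, s⟩, rfl⟩ := IsLocalization.mk'_surjective S x
  have hspec := IsLocalization.mk'_spec B a s
  have h₁ := congrArg d₁ hspec
  have h₂ := congrArg d₂ hspec
  rw [Derivation.leibniz, h a, h s] at h₁
  rw [Derivation.leibniz] at h₂
  rw [← (IsLocalization.map_units B s).smul_left_cancel]
  exact add_left_cancel (h₁.trans h₂.symm)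

theorem Derivation.exists_extension_of_isLocalization [Algebra R A] [IsScalarTower R A B]
    (S : Submonoid A) [IsLocalization S B] (d : Derivation R A B) :
    ∃ D : Derivation R B B, ∀ a, D (algebraMap A B a) = d a := by
  let ψ : A →+* TrivSqZeroExt B B :=
    { toFun a := .inl (algebraMap A B a) + .inr (d a)
      map_one' := by ext <;> simp
      map_mul' x y := by
        ext <;>
          simp [Derivation.leibniz, Algebra.smul_def x, Algebra.smul_def y, mul_comm, add_comm]
      map_zero' := by ext <;> simp
      map_add' x y := by ext <;> simp }
  have hψ : ∀ s : S, IsUnit (ψ s) := fun s =>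
    TrivSqZeroExt.isUnit_iff_isUnit_fst.mpr (by simpa [ψ] using IsLocalization.map_units B s)
  let σ : B →+* TrivSqZeroExt B B := IsLocalization.lift hψ
  have hσ : ∀ a, σ (algebraMap A B a) = .inl (algebraMap A B a) + .inr (d a) :=
    IsLocalization.lift_eq hψ
  have hfst : ∀ x, (σ x).fst = x := by
    suffices (TrivSqZeroExt.fstHom R B B).toRingHom.comp σ = RingHom.id B from
      fun x => RingHom.congr_fun this x
    refine IsLocalization.ringHom_ext S (RingHom.ext fun a => ?_)
    simp [hσ]
  refine ⟨Derivation.ofRingHomTrivSqZeroExt σ hfst fun r => ?_, fun a => by simp [hσ]⟩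
  simp [IsScalarTower.algebraMap_apply R A B, hσ]

end Localization

section SimpleExtension

variable {K L : Type*} [Field K]

theorem aeval_derivative_minpoly_ne_zero [CommRing L] [IsDomain L] [Algebra K L] {φ : L}
    {p : K[X]} (hp : aeval φ p = 0) (hp' : aeval φ (derivative p) ≠ 0) :
    aeval φ (derivative (minpoly K φ)) ≠ 0 := by
  obtain ⟨s, rfl⟩ := minpoly.dvd K φ hp
  intro h
  simp [derivative_mul, h] at hp'

theorem Derivation.ext_of_adjoin_singleton {R M : Type*} [CommSemiring R] [CommRing L]
    [Algebra K L] [Algebra R L] [AddCommGroup M] [Module L M] [Module R M] {φ : L}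
    (hgen : Algebra.adjoin K {φ} = ⊤) {D₁ D₂ : Derivation R L M}
    (hK : ∀ c, D₁ (algebraMap K L c) = D₂ (algebraMap K L c))
    (hφ : D₁ φ = D₂ φ) : D₁ = D₂ := by
  ext x
  have hx : x ∈ Algebra.adjoin K {φ} := hgen ▸ trivial
  induction hx using Algebra.adjoin_induction with
  | mem x hx => rwa [Set.mem_singleton_iff.mp hx]
  | algebraMap c => exact hK c
  | add x y _ _ hx hy => simp [hx, hy]
  | mul x y _ _ hx hy => simp [Derivation.leibniz, hx, hy]

theorem Derivation.exists_extension_of_adjoin_singleton {k : Type*} [CommRing k] [Field L]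
    [Algebra K L] [Algebra k K] [Algebra k L] [IsScalarTower k K L] {φ : L}
    (hgen : Algebra.adjoin K {φ} = ⊤) (hsep : aeval φ (derivative (minpoly K φ)) ≠ 0)
    (d : Derivation k K K) :
    ∃ D : Derivation k L L, ∀ c, D (algebraMap K L c) = algebraMap K L (d c) := by
  set m := minpoly K φ
  let e : K[X] →ₐ[k] L := (aeval φ).restrictScalars k
  have he : Function.Surjective e := by
    rwa [Algebra.adjoin_singleton_eq_range_aeval, AlgHom.range_eq_top] at hgen
  let dX : Derivation k K[X] K[X] := PolynomialModule.equivPolynomialSelf.compDer d.mapCoeffs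
  have hdX : ∀ c, dX (C c) = C (d c) := fun c => by simp [dX, ← monomial_zero_left]
  -- `δ = dX + v ∂ₓ` descends to `K[X] ⧸ (m) ≃ L` once `δ m` vanishes at `φ`, which fixes `v(φ)`.
  obtain ⟨v, hv⟩ := he (-aeval φ (dX m) / aeval φ (derivative m))
  let δ : Derivation k K[X] K[X] := dX + v • derivative'.restrictScalars k
  have hδm : aeval φ (δ m) = 0 := by
    simp only [AlgHom.coe_restrictScalars', Derivation.coe_add, Derivation.coe_smul, Pi.add_apply,
      Pi.smul_apply, Derivation.restrictScalars_apply, derivative'_apply, smul_eq_mul, map_add,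
      map_mul, e, δ] at hv ⊢
    rw [hv]
    field_simp
    ring
  have hker : ∀ x, e x = 0 → e (δ x) = 0 := by
    intro x hx
    obtain ⟨g, rfl⟩ := minpoly.dvd K φ hx
    simp [e, Derivation.leibniz, hδm, m]
  refine ⟨Derivation.liftOfSurjective he hker, fun c => ?_⟩
  simpa [e, δ, hdX] using Derivation.liftOfSurjective_apply he hker (C c)

end SimpleExtension

section AlphaTField

variable {k : Type*} [Field k]

theorem AlphaTField.derivation_ext {M : Type*} [AddCommGroup M] [Module (AlphaTField k) M]
    [Module k M] [IsScalarTower k (AlphaTField k) M] {d₁ d₂ : Derivation k (AlphaTField k) M}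
    (hα : d₁ (alphaGen k) = d₂ (alphaGen k)) (ht : d₁ (tGen k) = d₂ (tGen k)) : d₁ = d₂ := by
  refine Derivation.ext_of_isLocalization (nonZeroDivisors (MvPolynomial Bool k)) fun p => ?_
  rw [← IsScalarTower.coe_toAlgHom' k, MvPolynomial.aeval_unique (IsScalarTower.toAlgHom k _ _)]
  rw [alphaGen] at hα
  rw [tGen] at ht
  simp [Derivation.apply_mvPolynomial_aeval, hα, ht]

theorem AlphaTField.exists_derivation (a b : AlphaTField k) :
    ∃ d : Derivation k (AlphaTField k) (AlphaTField k), d (alphaGen k) = a ∧ d (tGen k) = b := by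
  obtain ⟨d, hd⟩ := Derivation.exists_extension_of_isLocalization
    (nonZeroDivisors (MvPolynomial Bool k)) (MvPolynomial.mkDerivation k fun i => cond i b a)
  exact ⟨d, by simp [alphaGen, hd], by simp [tGen, hd]⟩

end AlphaTField

section BurgerRoot

variable {k : Type*} [Field k] {L : Type*} [Field L] [Algebra (AlphaTField k) L] [Algebra k L]
  [IsScalarTower k (AlphaTField k) L]

variable (k) in
noncomputable def burgerPoint (φ : L) : Bool → L
  | false => algebraMap (AlphaTField k) L (tGen k) + algebraMap (AlphaTField k) L (alphaGen k) * φ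
  | true => φ

variable (k) in
noncomputable def burgerSubst : Bool → (AlphaTField k)[X]
  | false => C (tGen k) + C (alphaGen k) * X
  | true => X

theorem burgerQ_eq_aeval (f : MvPolynomial Bool k) :
    burgerQ k f = MvPolynomial.aeval (burgerSubst k) f :=
  rfl

theorem aeval_aeval_burgerSubst (g : MvPolynomial Bool k) (φ : L) :
    aeval φ (MvPolynomial.aeval (burgerSubst k) g) = MvPolynomial.aeval (burgerPoint k φ) g := by
  rw [← AlgHom.restrictScalars_apply k, MvPolynomial.comp_aeval_apply]
  congr; funext i; cases i <;> simp [burgerSubst, burgerPoint]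

theorem derivative_burgerQ (f : MvPolynomial Bool k) :
    derivative (burgerQ k f) =
      C (alphaGen k) * MvPolynomial.aeval (burgerSubst k) (MvPolynomial.pderiv false f) +
        MvPolynomial.aeval (burgerSubst k) (MvPolynomial.pderiv true f) := by
  have := (derivative' (R := AlphaTField k)).restrictScalars k |>.apply_mvPolynomial_aeval
    (burgerSubst k) f
  simp only [Derivation.restrictScalars_apply, derivative'_apply, Fintype.sum_bool, burgerSubst,
    smul_eq_mul, derivative_X, derivative_add, derivative_C, derivative_mul, zero_mul, zero_add,
    mul_one] at this
  rw [burgerQ_eq_aeval, this]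
  ring

theorem derivation_aeval_burgerQ (D : Derivation k L L) (f : MvPolynomial Bool k) (φ : L) :
    D (aeval φ (burgerQ k f)) =
      MvPolynomial.aeval (burgerPoint k φ) (MvPolynomial.pderiv false f) *
        (D (algebraMap (AlphaTField k) L (tGen k)) +
          φ * D (algebraMap (AlphaTField k) L (alphaGen k))) +
      aeval φ (derivative (burgerQ k f)) * D φ := by
  rw [derivative_burgerQ, burgerQ_eq_aeval]
  simp only [aeval_aeval_burgerSubst, Derivation.apply_mvPolynomial_aeval, Fintype.sum_bool,
    burgerPoint, smul_eq_mul, map_add, Derivation.leibniz, map_mul, aeval_C]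
  ring

theorem exists_derivation_alphaGen_tGen {φ : L} (hadj : Algebra.adjoin (AlphaTField k) {φ} = ⊤)
    (hsep : aeval φ (derivative (minpoly (AlphaTField k) φ)) ≠ 0) (a b : AlphaTField k) :
    ∃ D : Derivation k L L,
      D (algebraMap (AlphaTField k) L (alphaGen k)) = algebraMap (AlphaTField k) L a ∧
      D (algebraMap (AlphaTField k) L (tGen k)) = algebraMap (AlphaTField k) L b := by
  obtain ⟨d, hα, ht⟩ := AlphaTField.exists_derivation a b
  obtain ⟨D, hD⟩ := Derivation.exists_extension_of_adjoin_singleton hadj hsep d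
  exact ⟨D, by rw [hD, hα], by rw [hD, ht]⟩

theorem derivation_eq_of_alphaGen_tGen {f : MvPolynomial Bool k} {φ : L}
    (hroot : aeval φ (burgerQ k f) = 0) (hsimple : aeval φ (derivative (burgerQ k f)) ≠ 0)
    (hadj : Algebra.adjoin (AlphaTField k) {φ} = ⊤) {D₁ D₂ : Derivation k L L}
    (hα : D₁ (algebraMap (AlphaTField k) L (alphaGen k)) =
      D₂ (algebraMap (AlphaTField k) L (alphaGen k)))
    (ht : D₁ (algebraMap (AlphaTField k) L (tGen k)) = D₂ (algebraMap (AlphaTField k) L (tGen k))) :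
    D₁ = D₂ := by
  have hK := AlphaTField.derivation_ext (d₁ := D₁.compAlgebraMap (AlphaTField k))
    (d₂ := D₂.compAlgebraMap (AlphaTField k)) hα ht
  refine Derivation.ext_of_adjoin_singleton hadj (fun c => congr($hK c)) ?_
  have h₁ := derivation_aeval_burgerQ D₁ f φ
  have h₂ := derivation_aeval_burgerQ D₂ f φ
  rw [hroot, map_zero, hα, ht] at h₁
  rw [hroot, map_zero] at h₂
  exact mul_left_cancel₀ hsimple (by linear_combination h₂ - h₁)

theorem burger_of_alphaGen_tGen {f : MvPolynomial Bool k} {φ : L}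
    (hroot : aeval φ (burgerQ k f) = 0) (hsimple : aeval φ (derivative (burgerQ k f)) ≠ 0)
    (Dα Dt : Derivation k L L)
    (h₁ : Dα (algebraMap (AlphaTField k) L (alphaGen k)) = 1)
    (h₂ : Dα (algebraMap (AlphaTField k) L (tGen k)) = 0)
    (h₃ : Dt (algebraMap (AlphaTField k) L (alphaGen k)) = 0)
    (h₄ : Dt (algebraMap (AlphaTField k) L (tGen k)) = 1) :
    Dα φ = φ * Dt φ := by
  have hA := derivation_aeval_burgerQ Dα f φ
  have hT := derivation_aeval_burgerQ Dt f φ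
  rw [hroot, map_zero, h₁, h₂] at hA
  rw [hroot, map_zero, h₃, h₄] at hT
  exact mul_left_cancel₀ hsimple (by linear_combination φ * hT - hA)

end BurgerRoot

/-- **Burger's equation lemma.** Let `k` be a field, `f ∈ k[t,x]`, and
`q(α,t,x) = f(t+αx,x) ∈ k[α,t,x]`. Let `φ` be a simple root in `x` of `q` in a field
`L = k(α,t,φ)`. Then the derivations `∂_α` and `∂_t` of `k(α,t)` (the unique `k`-linear
derivations sending `(α,t)` to `(1,0)` and `(0,1)` respectively) extend uniquely to `L`, and
the extensions satisfy `∂_α φ = φ · ∂_t φ`. -/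
theorem burger_equation (k : Type*) [Field k] (f : MvPolynomial Bool k)
    (L : Type*) [Field L] [Algebra (AlphaTField k) L]
    [Algebra k L] [IsScalarTower k (AlphaTField k) L]
    (φ : L)
    (hroot : Polynomial.aeval φ (burgerQ k f) = 0)
    (hsimple : Polynomial.aeval φ (Polynomial.derivative (burgerQ k f)) ≠ 0)
    (hgen : IntermediateField.adjoin (AlphaTField k) {φ} = ⊤) :
    (∃! Dα : Derivation k L L,
        Dα (algebraMap (AlphaTField k) L (alphaGen k)) = 1 ∧
        Dα (algebraMap (AlphaTField k) L (tGen k)) = 0) ∧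
    (∃! Dt : Derivation k L L,
        Dt (algebraMap (AlphaTField k) L (alphaGen k)) = 0 ∧
        Dt (algebraMap (AlphaTField k) L (tGen k)) = 1) ∧
    (∀ Dα Dt : Derivation k L L,
        Dα (algebraMap (AlphaTField k) L (alphaGen k)) = 1 →
        Dα (algebraMap (AlphaTField k) L (tGen k)) = 0 →
        Dt (algebraMap (AlphaTField k) L (alphaGen k)) = 0 →
        Dt (algebraMap (AlphaTField k) L (tGen k)) = 1 →
        Dα φ = φ * Dt φ) := by
  have halg : IsAlgebraic (AlphaTField k) φ := ⟨burgerQ k f, fun h => hsimple (by simp [h]), hroot⟩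
  have hadj : Algebra.adjoin (AlphaTField k) {φ} = ⊤ := by
    rw [← IntermediateField.adjoin_simple_toSubalgebra_of_isAlgebraic halg, hgen,
      IntermediateField.top_toSubalgebra]
  have hsep := aeval_derivative_minpoly_ne_zero hroot hsimple
  obtain ⟨Dα, hDα⟩ := exists_derivation_alphaGen_tGen (k := k) hadj hsep 1 0
  obtain ⟨Dt, hDt⟩ := exists_derivation_alphaGen_tGen (k := k) hadj hsep 0 1
  rw [map_one, map_zero] at hDα hDt
  refine ⟨⟨Dα, hDα, fun D hD => ?_⟩, ⟨Dt, hDt, fun D hD => ?_⟩,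
    fun Dα Dt => burger_of_alphaGen_tGen hroot hsimple Dα Dt⟩
  · exact derivation_eq_of_alphaGen_tGen hroot hsimple hadj (hD.1.trans hDα.1.symm)
      (hD.2.trans hDα.2.symm)
  · exact derivation_eq_of_alphaGen_tGen hroot hsimple hadj (hD.1.trans hDt.1.symm)
      (hD.2.trans hDt.2.symm)
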